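/- arXiv:2505.15575 — 6 statements merged into one kernel-verified Lean document; each statement's English description precedes it below -/
import Mathlib

section
/- Let μ, ν be probability measures on ℝ, and suppose α is an atom of μ and β is an atom of ν with μ({α}) + ν({β}) > 1. Then F_{μ⊞ν}(α+β) = F_μ(α) + F_ν(β) - 1, where F denotes the cumulative distribution function. -/
open MeasureTheory

noncomputable def cdf (μ : Measure ℝ) (x : ℝ) : ℝ := (μ (Set.Iic x)).toReal

/-!
Moving the mass of `μ` on `(-∞, α]` to the point `α` gives a measure `μ|_α` that is
stochastically below `μ` and has an atom of mass `F_μ(α)` at `α`. The atom theorem applied to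
`μ|_α ⊞ ν|_β` together with monotonicity of `⊞` gives `F_μ(α) + F_ν(β) - 1 ≤ F_{μ⊞ν}(α+β)`.
The same bound for the reflections `μ̂, ν̂` at `-α, -β` bounds `(μ ⊞ ν)(-∞, α+β)` from above by
`μ(-∞, α) + ν(-∞, β) - 1`; adding the atom of `μ ⊞ ν` at `α + β` gives the reverse inequality.
-/

open Set

section CdfLemmas

variable (κ : Measure ℝ) (a : ℝ)

theorem cdf_eq_toReal_Iio_add_toReal_singleton [IsFiniteMeasure κ] :
    cdf κ a = (κ (Iio a)).toReal + (κ {a}).toReal := by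
  rw [cdf, ← Iio_union_right, measure_union (by simp) (measurableSet_singleton a),
    ENNReal.toReal_add (measure_ne_top _ _) (measure_ne_top _ _)]

theorem toReal_singleton_le_cdf [IsFiniteMeasure κ] : (κ {a}).toReal ≤ cdf κ a := by
  rw [cdf_eq_toReal_Iio_add_toReal_singleton]
  linarith [ENNReal.toReal_nonneg (a := κ (Iio a))]

theorem map_neg_singleton : κ.map (fun t => -t) {-a} = κ {a} := by
  rw [Measure.map_apply measurable_neg (measurableSet_singleton _)]
  simp only [neg_preimage, neg_singleton, neg_neg]

theorem cdf_map_neg [IsProbabilityMeasure κ] :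
    cdf (κ.map fun t => -t) (-a) = 1 - (κ (Iio a)).toReal := by
  rw [cdf, Measure.map_apply measurable_neg measurableSet_Iic]
  simp only [neg_preimage, neg_Iic, neg_neg]
  rw [← compl_Iio, ← measureReal_def, probReal_compl_eq_one_sub measurableSet_Iio, measureReal_def]

end CdfLemmas

noncomputable def cutDown (μ : Measure ℝ) (α : ℝ) : Measure ℝ :=
  μ (Iic α) • Measure.dirac α + μ.restrict (Ioi α)

section CutDown

variable (μ : Measure ℝ) (α : ℝ)

theorem cutDown_Iic (x : ℝ) : cutDown μ α (Iic x) = if α ≤ x then μ (Iic x) else 0 := by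
  rw [cutDown, Measure.add_apply, Measure.smul_apply, Measure.dirac_apply' _ measurableSet_Iic,
    Measure.restrict_apply measurableSet_Iic, Iic_inter_Ioi]
  split_ifs with hx
  · rw [indicator_of_mem (mem_Iic.2 hx), Pi.one_apply, smul_eq_mul, mul_one,
      ← measure_union (Iic_disjoint_Ioc le_rfl) measurableSet_Ioc, Iic_union_Ioc_eq_Iic hx]
  · rw [indicator_of_notMem (by simpa using hx), Ioc_eq_empty_of_le (not_le.1 hx).le, smul_zero,
      measure_empty, add_zero]

theorem cutDown_singleton : cutDown μ α {α} = μ (Iic α) := by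
  rw [cutDown, Measure.add_apply, Measure.smul_apply, Measure.dirac_apply_of_mem (mem_singleton α),
    Measure.restrict_apply (measurableSet_singleton α), singleton_inter_eq_empty.2 self_notMem_Ioi,
    measure_empty, add_zero, smul_eq_mul, mul_one]

instance [IsProbabilityMeasure μ] : IsProbabilityMeasure (cutDown μ α) := by
  constructor
  rw [cutDown, Measure.add_apply, Measure.smul_apply, Measure.dirac_apply_of_mem (mem_univ α),
    Measure.restrict_apply MeasurableSet.univ, univ_inter, smul_eq_mul, mul_one,
    ← measure_union (Iic_disjoint_Ioi le_rfl) measurableSet_Ioi, Iic_union_Ioi, measure_univ]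

theorem cdf_cutDown_le (x : ℝ) : cdf (cutDown μ α) x ≤ cdf μ x := by
  rw [cdf, cdf, cutDown_Iic]
  split_ifs
  exacts [le_rfl, ENNReal.toReal_nonneg]

end CutDown

theorem cdf_add_cdf_sub_one_le_cdf_conv (conv : Measure ℝ → Measure ℝ → Measure ℝ)
    (hprob : ∀ μ ν : Measure ℝ, IsProbabilityMeasure μ → IsProbabilityMeasure ν →
      IsProbabilityMeasure (conv μ ν))
    (hcomm : ∀ μ ν : Measure ℝ, conv μ ν = conv ν μ)
    (hmono : ∀ μ₁ μ₂ ν : Measure ℝ, IsProbabilityMeasure μ₁ → IsProbabilityMeasure μ₂ →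
      IsProbabilityMeasure ν → (∀ x, cdf μ₂ x ≤ cdf μ₁ x) →
      ∀ x, cdf (conv μ₂ ν) x ≤ cdf (conv μ₁ ν) x)
    (hatom : ∀ μ ν : Measure ℝ, IsProbabilityMeasure μ → IsProbabilityMeasure ν →
      ∀ α β : ℝ, 1 < (μ {α}).toReal + (ν {β}).toReal →
      ((conv μ ν) {α + β}).toReal = (μ {α}).toReal + (ν {β}).toReal - 1)
    (μ ν : Measure ℝ) [IsProbabilityMeasure μ] [IsProbabilityMeasure ν] (α β : ℝ)
    (h : 1 < (μ {α}).toReal + (ν {β}).toReal) :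
    cdf μ α + cdf ν β - 1 ≤ cdf (conv μ ν) (α + β) := by
  set μα := cutDown μ α
  set νβ := cutDown ν β
  have hμα : (μα {α}).toReal = cdf μ α := by rw [cutDown_singleton, cdf]
  have hνβ : (νβ {β}).toReal = cdf ν β := by rw [cutDown_singleton, cdf]
  have hcut : 1 < (μα {α}).toReal + (νβ {β}).toReal := by
    rw [hμα, hνβ]
    linarith [toReal_singleton_le_cdf μ α, toReal_singleton_le_cdf ν β]
  have := hprob μα νβ inferInstance inferInstance
  calc cdf μ α + cdf ν β - 1 = (conv μα νβ {α + β}).toReal := by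
        rw [hatom μα νβ inferInstance inferInstance α β hcut, hμα, hνβ]
    _ ≤ cdf (conv μα νβ) (α + β) := toReal_singleton_le_cdf _ _
    _ ≤ cdf (conv μα ν) (α + β) := by
        rw [hcomm μα νβ, hcomm μα ν]
        exact hmono ν νβ μα inferInstance inferInstance inferInstance (cdf_cutDown_le ν β) _
    _ ≤ cdf (conv μ ν) (α + β) :=
        hmono μ μα ν inferInstance inferInstance inferInstance (cdf_cutDown_le μ α) _

theorem cdf_at_atom_freeAdd_general
    (conv : Measure ℝ → Measure ℝ → Measure ℝ)
    (hprob : ∀ μ ν : Measure ℝ, IsProbabilityMeasure μ → IsProbabilityMeasure ν →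
      IsProbabilityMeasure (conv μ ν))
    (hcomm : ∀ μ ν : Measure ℝ, conv μ ν = conv ν μ)
    (hmono : ∀ μ₁ μ₂ ν : Measure ℝ, IsProbabilityMeasure μ₁ → IsProbabilityMeasure μ₂ →
      IsProbabilityMeasure ν → (∀ x, cdf μ₂ x ≤ cdf μ₁ x) →
      ∀ x, cdf (conv μ₂ ν) x ≤ cdf (conv μ₁ ν) x)
    (hatom : ∀ μ ν : Measure ℝ, IsProbabilityMeasure μ → IsProbabilityMeasure ν →
      ∀ α β : ℝ, 1 < (μ {α}).toReal + (ν {β}).toReal →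
      ((conv μ ν) {α + β}).toReal = (μ {α}).toReal + (ν {β}).toReal - 1)
    (hrefl : ∀ μ ν : Measure ℝ, IsProbabilityMeasure μ → IsProbabilityMeasure ν →
      conv (μ.map (fun t => -t)) (ν.map (fun t => -t)) = (conv μ ν).map (fun t => -t))
    (μ ν : Measure ℝ) (hμ : IsProbabilityMeasure μ) (hν : IsProbabilityMeasure ν)
    (α β : ℝ) (h : 1 < (μ {α}).toReal + (ν {β}).toReal) :
    cdf (conv μ ν) (α + β) = cdf μ α + cdf ν β - 1 := by
  have := hprob μ ν hμ hν
  have := Measure.isProbabilityMeasure_map (μ := μ) measurable_neg.aemeasurable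
  have := Measure.isProbabilityMeasure_map (μ := ν) measurable_neg.aemeasurable
  have lower := cdf_add_cdf_sub_one_le_cdf_conv conv hprob hcomm hmono hatom μ ν α β h
  have upper := cdf_add_cdf_sub_one_le_cdf_conv conv hprob hcomm hmono hatom
    (μ.map fun t => -t) (ν.map fun t => -t) (-α) (-β)
    (by rwa [map_neg_singleton, map_neg_singleton])
  rw [hrefl μ ν hμ hν, ← neg_add, cdf_map_neg, cdf_map_neg, cdf_map_neg] at upper
  have atom := hatom μ ν hμ hν α β h
  simp only [cdf_eq_toReal_Iio_add_toReal_singleton] at lower ⊢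
  linarith

/-- If `α` is an atom of `μ` and `β` an atom of `ν` with `μ({α}) + ν({β}) > 1`, then
`F_{μ⊞ν}(α+β) = F_μ(α) + F_ν(β) - 1`.  The free additive convolution is formalized as an
abstract operation `conv` satisfying the known properties of `⊞`: it maps probability measures
to probability measures, it is commutative, monotone for the stochastic order, satisfies
`δ_a ⊞ δ_b = δ_{a+b}`, the Bercovici–Voiculescu atom theorem, and the reflection identity
`(μ ⊞ ν)^ = μ̂ ⊞ ν̂`. -/
theorem cdf_at_atom_freeAdd
    (conv : Measure ℝ → Measure ℝ → Measure ℝ)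
    (hprob : ∀ μ ν : Measure ℝ, IsProbabilityMeasure μ → IsProbabilityMeasure ν →
      IsProbabilityMeasure (conv μ ν))
    (hcomm : ∀ μ ν : Measure ℝ, conv μ ν = conv ν μ)
    (hmono : ∀ μ₁ μ₂ ν : Measure ℝ, IsProbabilityMeasure μ₁ → IsProbabilityMeasure μ₂ →
      IsProbabilityMeasure ν → (∀ x, cdf μ₂ x ≤ cdf μ₁ x) →
      ∀ x, cdf (conv μ₂ ν) x ≤ cdf (conv μ₁ ν) x)
    (hdirac : ∀ a b : ℝ, conv (Measure.dirac a) (Measure.dirac b) = Measure.dirac (a + b))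
    (hatom : ∀ μ ν : Measure ℝ, IsProbabilityMeasure μ → IsProbabilityMeasure ν →
      ∀ α β : ℝ, 1 < (μ {α}).toReal + (ν {β}).toReal →
      ((conv μ ν) {α + β}).toReal = (μ {α}).toReal + (ν {β}).toReal - 1)
    (hrefl : ∀ μ ν : Measure ℝ, IsProbabilityMeasure μ → IsProbabilityMeasure ν →
      conv (μ.map (fun t => -t)) (ν.map (fun t => -t)) = (conv μ ν).map (fun t => -t))
    (μ ν : Measure ℝ) (hμ : IsProbabilityMeasure μ) (hν : IsProbabilityMeasure ν)
    (α β : ℝ) (h : 1 < (μ {α}).toReal + (ν {β}).toReal) :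
    cdf (conv μ ν) (α + β) = cdf μ α + cdf ν β - 1 :=
  cdf_at_atom_freeAdd_general conv hprob hcomm hmono hatom hrefl μ ν hμ hν α β h
end

section
/- Let p, q be monic complex polynomials of degree d such that α is a root of p of multiplicity m_α and β is a root of q of multiplicity m_β, with m := m_α + m_β - d ≥ 0. Then α + β is a root of the finite free additive convolution p ⊞_d q of multiplicity exactly m (in particular, if m = 0 then α + β is not a root of p ⊞_d q). -/
/-!
Since `p ⊞_d q = ∑_j q_{d-j} / (d)_j • p^{(j)}` with `(d)_j = d!/(d-j)!`, the convolution commutes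
with translating either argument, so it suffices to take `α = β = 0`, where the root multiplicity
is the trailing degree. In this formula the coefficient of `x ^ n` is a sum of multiples of
`q_{d-j} p_{n+j}`, which vanish unless `d - j ≥ m_β` and `n + j ≥ m_α`. Hence all coefficients
below `m_α + m_β - d` vanish, and at `n = m_α + m_β - d` the only surviving term is `j = d - m_β`,
a nonzero multiple of the product of the two trailing coefficients.
-/

open Polynomial Finset

/-- The normalized coefficients of a monic degree-`d` polynomial:
`p(x) = Σ_{k=0}^d x^{d-k} (-1)^k C(d,k) ẽ_k(p)`. -/
noncomputable def etilde (d : ℕ) (p : Polynomial ℂ) (k : ℕ) : ℂ :=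
  (-1) ^ k * p.coeff (d - k) / (d.choose k : ℂ)

/-- The finite free additive convolution of two degree-`d` polynomials, defined by
`ẽ_k(p ⊞_d q) = Σ_{i=0}^k C(k,i) ẽ_i(p) ẽ_{k-i}(q)`. -/
noncomputable def ffAdd (d : ℕ) (p q : Polynomial ℂ) : Polynomial ℂ :=
  ∑ k ∈ range (d + 1),
    C ((-1) ^ k * (d.choose k : ℂ) *
      ∑ i ∈ range (k + 1), (k.choose i : ℂ) * etilde d p i * etilde d q (k - i)) * X ^ (d - k)

theorem Nat.choose_mul_choose_mul_descFactorial (n j k : ℕ) :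
    (n + j + k).choose (j + k) * (j + k).choose k * (n + j + k).descFactorial j =
      (n + j).descFactorial j * (n + j + k).choose k * (n + j + k).choose j := by
  have h := Nat.choose_mul (n := n + j + k) (k := n + j) (s := n) (Nat.le_add_right n j)
  rw [Nat.add_sub_cancel_left, add_assoc n j k, Nat.add_sub_cancel_left, Nat.choose_symm_add,
    Nat.choose_symm_add, ← add_assoc, Nat.choose_symm_add (a := n + j)] at h
  rw [Nat.descFactorial_eq_factorial_mul_choose, Nat.descFactorial_eq_factorial_mul_choose,
    ← Nat.choose_symm_add (a := j), ← h]
  ring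

theorem coeff_ffAdd {d n : ℕ} (p q : ℂ[X]) (hn : n ≤ d) :
    (ffAdd d p q).coeff n = (-1) ^ (d - n) * (d.choose (d - n) : ℂ) *
      ∑ i ∈ range (d - n + 1), ((d - n).choose i : ℂ) * etilde d p i * etilde d q (d - n - i) := by
  rw [ffAdd, finsetSum_coeff, sum_eq_single_of_mem (d - n) (by simp)]
  · rw [coeff_C_mul_X_pow, if_pos (by omega)]
  · intro k hk hne
    rw [coeff_C_mul_X_pow, if_neg (by simp at hk; omega)]

theorem coeff_ffAdd_of_lt {d n : ℕ} (p q : ℂ[X]) (hn : d < n) : (ffAdd d p q).coeff n = 0 := by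
  rw [ffAdd, finsetSum_coeff]
  exact sum_eq_zero fun k hk => by rw [coeff_C_mul_X_pow, if_neg (by omega)]

theorem coeff_ffAdd_eq_sum {d : ℕ} {p : ℂ[X]} (q : ℂ[X]) (hpd : p.natDegree ≤ d) (n : ℕ) :
    (ffAdd d p q).coeff n = ∑ j ∈ range (d + 1),
      q.coeff (d - j) / d.descFactorial j * ((n + j).descFactorial j * p.coeff (n + j)) := by
  rcases le_or_gt n d with hn | hn
  · rw [coeff_ffAdd p q hn, mul_sum, ← sum_range_reflect,
      ← sum_subset (range_subset_range.2 (by omega : d - n + 1 ≤ d + 1))]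
    · -- the term `i = d - n - j` of `coeff_ffAdd` becomes the term `j` here
      refine sum_congr rfl fun j hj => ?_
      obtain ⟨k, rfl⟩ : ∃ k, d = n + j + k := ⟨d - (n + j), by simp at hj; omega⟩
      rw [show n + j + k - n + 1 - 1 - j = k by omega, show n + j + k - n = j + k by omega]
      simp only [etilde, Nat.add_sub_cancel, show n + j + k - k = n + j by omega,
        show n + j + k - j = n + k by omega]
      have hsign : (-1 : ℂ) ^ (j + k) * (-1) ^ k * (-1) ^ j = 1 := by
        rw [← pow_add, ← pow_add]; exact Even.neg_one_pow ⟨j + k, by ring⟩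
      have key := congrArg (Nat.cast (R := ℂ)) (Nat.choose_mul_choose_mul_descFactorial n j k)
      push_cast at key
      have : ((n + j + k).choose k : ℂ) ≠ 0 := Nat.cast_ne_zero.2 (Nat.choose_pos (by omega)).ne'
      have : ((n + j + k).choose j : ℂ) ≠ 0 := Nat.cast_ne_zero.2 (Nat.choose_pos (by omega)).ne'
      have : ((n + j + k).descFactorial j : ℂ) ≠ 0 :=
        Nat.cast_ne_zero.2 (Nat.descFactorial_pos.2 (by omega)).ne'
      field_simp
      linear_combination (p.coeff (n + j) * q.coeff (n + k) * ((n + j + k).choose (j + k) : ℂ) *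
        ((j + k).choose k : ℂ) * ((n + j + k).descFactorial j : ℂ)) * hsign +
        p.coeff (n + j) * q.coeff (n + k) * key
    · intro j _ hj
      rw [coeff_eq_zero_of_natDegree_lt (p := p) (by simp at hj; omega), mul_zero, mul_zero]
  · rw [coeff_ffAdd_of_lt p q hn]
    refine (sum_eq_zero fun j _ => ?_).symm
    rw [coeff_eq_zero_of_natDegree_lt (p := p) (by omega), mul_zero, mul_zero]

theorem ffAdd_eq_sum_smul_iterate_derivative {d : ℕ} {p : ℂ[X]} (q : ℂ[X])
    (hpd : p.natDegree ≤ d) :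
    ffAdd d p q =
      ∑ j ∈ range (d + 1), (q.coeff (d - j) / d.descFactorial j) • derivative^[j] p := by
  ext n
  rw [coeff_ffAdd_eq_sum q hpd, finsetSum_coeff]
  refine sum_congr rfl fun j _ => ?_
  rw [coeff_smul, coeff_iterate_derivative, nsmul_eq_mul, smul_eq_mul]

theorem ffAdd_comm (d : ℕ) (p q : ℂ[X]) : ffAdd d p q = ffAdd d q p := by
  unfold ffAdd
  refine sum_congr rfl fun k _ => ?_
  congr 3
  rw [← sum_range_reflect]
  refine sum_congr rfl fun i hi => ?_
  simp only [mem_range] at hi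
  rw [Nat.add_sub_cancel, show k - (k - i) = i by omega, Nat.choose_symm (by omega)]
  ring

theorem Polynomial.derivative_taylor {R : Type*} [CommSemiring R] (r : R) (p : R[X]) :
    derivative (taylor r p) = taylor r (derivative p) := by
  simp [taylor_apply, derivative_comp]

theorem Polynomial.iterate_derivative_taylor {R : Type*} [CommSemiring R] (r : R) (p : R[X])
    (k : ℕ) : derivative^[k] (taylor r p) = taylor r (derivative^[k] p) :=
  Function.Commute.iterate_left (derivative_taylor r) k p

theorem ffAdd_taylor_left {d : ℕ} {p : ℂ[X]} (q : ℂ[X]) (hpd : p.natDegree ≤ d) (r : ℂ) :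
    ffAdd d (taylor r p) q = taylor r (ffAdd d p q) := by
  rw [ffAdd_eq_sum_smul_iterate_derivative q ((natDegree_taylor p r).trans_le hpd),
    ffAdd_eq_sum_smul_iterate_derivative q hpd, map_sum]
  simp_rw [map_smul, iterate_derivative_taylor]

theorem ffAdd_taylor {d : ℕ} {p q : ℂ[X]} (hpd : p.natDegree ≤ d) (hqd : q.natDegree ≤ d)
    (a b : ℂ) : ffAdd d (taylor a p) (taylor b q) = taylor (a + b) (ffAdd d p q) := by
  rw [ffAdd_taylor_left _ hpd, ffAdd_comm, ffAdd_taylor_left _ hqd, taylor_taylor, ffAdd_comm]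

theorem natTrailingDegree_ffAdd {d : ℕ} {p q : ℂ[X]} (hp : p ≠ 0) (hq : q ≠ 0)
    (hpd : p.natDegree ≤ d) (hqd : q.natDegree ≤ d)
    (hm : d ≤ p.natTrailingDegree + q.natTrailingDegree) :
    (ffAdd d p q).natTrailingDegree = p.natTrailingDegree + q.natTrailingDegree - d := by
  have hqd' : q.natTrailingDegree ≤ d := (natTrailingDegree_le_natDegree q).trans hqd
  have hterm (n j : ℕ) (h : n + j < p.natTrailingDegree ∨ d - j < q.natTrailingDegree) :
      q.coeff (d - j) / d.descFactorial j * ((n + j).descFactorial j * p.coeff (n + j)) = 0 := by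
    rcases h with h | h
    · rw [coeff_eq_zero_of_lt_natTrailingDegree h, mul_zero, mul_zero]
    · rw [coeff_eq_zero_of_lt_natTrailingDegree h, zero_div, zero_mul]
  have hlow : ∀ n < p.natTrailingDegree + q.natTrailingDegree - d, (ffAdd d p q).coeff n = 0 :=
    fun n hn => by
      rw [coeff_ffAdd_eq_sum q hpd]
      exact sum_eq_zero fun j hj => hterm n j (by simp only [mem_range] at hj; omega)
  have hlowest : (ffAdd d p q).coeff (p.natTrailingDegree + q.natTrailingDegree - d) =
      q.trailingCoeff / d.descFactorial (d - q.natTrailingDegree) *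
        (p.natTrailingDegree.descFactorial (d - q.natTrailingDegree) * p.trailingCoeff) := by
    rw [coeff_ffAdd_eq_sum q hpd, sum_eq_single_of_mem (d - q.natTrailingDegree) (by simp),
      Nat.sub_sub_self hqd', show p.natTrailingDegree + q.natTrailingDegree - d +
        (d - q.natTrailingDegree) = p.natTrailingDegree by omega]
    · rfl
    · exact fun j hj hjb => hterm _ j (by simp only [mem_range] at hj; omega)
  have hne : (ffAdd d p q).coeff (p.natTrailingDegree + q.natTrailingDegree - d) ≠ 0 := by
    rw [hlowest]
    refine mul_ne_zero (div_ne_zero (trailingCoeff_nonzero_iff_nonzero.2 hq) ?_)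
      (mul_ne_zero ?_ (trailingCoeff_nonzero_iff_nonzero.2 hp)) <;>
    exact Nat.cast_ne_zero.2 (Nat.descFactorial_pos.2 (by omega)).ne'
  exact le_antisymm (natTrailingDegree_le_of_ne_zero hne)
    (le_natTrailingDegree (fun h => hne (by rw [h, coeff_zero])) hlow)

theorem ffAdd_rootMultiplicity (d : ℕ) (p q : Polynomial ℂ)
    (hp : p.Monic) (hq : q.Monic) (hpd : p.natDegree = d) (hqd : q.natDegree = d)
    (α β : ℂ) (mα mβ : ℕ)
    (hα : p.rootMultiplicity α = mα) (hβ : q.rootMultiplicity β = mβ)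
    (hm : d ≤ mα + mβ) :
    (ffAdd d p q).rootMultiplicity (α + β) = mα + mβ - d := by
  have rootMultiplicity_eq (f : ℂ[X]) (t : ℂ) :
      f.rootMultiplicity t = (taylor t f).natTrailingDegree := by
    rw [taylor_apply, rootMultiplicity_eq_natTrailingDegree]
  subst hα hβ
  simp only [rootMultiplicity_eq] at hm ⊢
  rw [← ffAdd_taylor hpd.le hqd.le]
  exact natTrailingDegree_ffAdd (mt (taylor_eq_zero _ _).1 hp.ne_zero)
    (mt (taylor_eq_zero _ _).1 hq.ne_zero) ((natDegree_taylor p α).trans_le hpd.le)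
    ((natDegree_taylor q β).trans_le hqd.le) hm
end

section
/- Let p, q be monic complex polynomials of degree d such that α ≠ 0 is a root of p of multiplicity m_α and β ≠ 0 is a root of q of multiplicity m_β, with m := m_α + m_β - d ≥ 0. Then αβ is a root of the finite free multiplicative convolution p ⊠_d q of multiplicity exactly m. -/
/-! With `g` the reversal of `q` (a root of multiplicity `mβ` at `β⁻¹`, and `g_{d-k} = q_k`), the
sum `∑ₖ g⁽ᵈ⁻ᵏ⁾(b) (-z)ᵏ p⁽ᵏ⁾(b z)` does not depend on `b`, and at `b = 0` it is
`(-1)ᵈ d! (p ⊠_d q)(z)`. At `b = β⁻¹` only the terms `k ≤ d - mβ` survive, and at `z = αβ` the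
factor `p⁽ᵏ⁾(β⁻¹ z)` vanishes to order `mα - k`, which exceeds `m = mα + mβ - d` except for
`k = d - mβ`, where it equals `m`. -/

open Polynomial Finset

/-- The finite free multiplicative convolution of two degree-`d` polynomials, defined by
`ẽ_k(p ⊠_d q) = ẽ_k(p) ẽ_k(q)`. -/
noncomputable def ffMul (d : ℕ) (p q : Polynomial ℂ) : Polynomial ℂ :=
  ∑ k ∈ range (d + 1),
    C ((-1) ^ k * (d.choose k : ℂ) * (etilde d p k * etilde d q k)) * X ^ (d - k)

open scoped Nat

namespace Polynomial

section CommRing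

variable {R : Type*} [CommRing R]

theorem rootMultiplicity_add_of_pow_succ_dvd {p q : R[X]} {a : R} (hp : p ≠ 0)
    (hq : (X - C a) ^ (p.rootMultiplicity a + 1) ∣ q) :
    (p + q).rootMultiplicity a = p.rootMultiplicity a := by
  have hndvd := pow_rootMultiplicity_not_dvd hp a
  have hpq : p + q ≠ 0 := fun h => hndvd <| by
    simpa only [add_sub_cancel_right] using dvd_sub ((dvd_zero _).trans (dvd_of_eq h.symm)) hq
  refine le_antisymm ?_ ?_
  · rw [rootMultiplicity_le_iff hpq]
    exact fun h => hndvd (by simpa only [add_sub_cancel_right] using dvd_sub h hq)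
  · rw [le_rootMultiplicity_iff hpq]
    exact dvd_add (pow_rootMultiplicity_dvd p a) ((pow_dvd_pow _ (Nat.le_succ _)).trans hq)

theorem rootMultiplicity_sum_of_pow_succ_dvd {ι : Type*} {s : Finset ι} {f : ι → R[X]} {i : ι}
    {a : R} (hi : i ∈ s) (hfi : f i ≠ 0)
    (h : ∀ j ∈ s, j ≠ i → (X - C a) ^ ((f i).rootMultiplicity a + 1) ∣ f j) :
    (∑ j ∈ s, f j).rootMultiplicity a = (f i).rootMultiplicity a := by
  classical
  rw [← add_sum_erase s f hi]
  exact rootMultiplicity_add_of_pow_succ_dvd hfi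
    (dvd_sum fun j hj => h j (mem_of_mem_erase hj) (ne_of_mem_erase hj))

theorem rootMultiplicity_comp_C_mul_X (f : R[X]) {a : R} (ha : IsUnit a) (c : R) :
    (f.comp (C a * X)).rootMultiplicity c = f.rootMultiplicity (a * c) := by
  simpa using rootMultiplicity_comp_C_mul_X_add_C f a 0 c ha

theorem eval_zero_iterate_derivative (p : R[X]) (k : ℕ) :
    (derivative^[k] p).eval 0 = k ! * p.coeff k := by
  rw [← coeff_zero_eq_eval_zero, coeff_iterate_derivative, zero_add, Nat.descFactorial_self,
    nsmul_eq_mul]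

end CommRing

section IsDomain

variable {R : Type*} [CommRing R] [IsDomain R]

theorem rootMultiplicity_le_natDegree (p : R[X]) (a : R) :
    p.rootMultiplicity a ≤ p.natDegree := by
  classical
  exact count_roots p ▸ (Multiset.count_le_card a p.roots).trans (card_roots' p)

theorem rootMultiplicity_mul_of_not_isRoot {p : R[X]} {a : R} (hp : ¬p.IsRoot a) (q : R[X]) :
    (p * q).rootMultiplicity a = q.rootMultiplicity a := by
  rcases eq_or_ne q 0 with rfl | hq
  · simp
  have hp0 : p ≠ 0 := by rintro rfl; simp at hp
  rw [rootMultiplicity_mul (mul_ne_zero hp0 hq), rootMultiplicity_eq_zero hp, zero_add]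

theorem reverse_pow (p : R[X]) (n : ℕ) : (p ^ n).reverse = p.reverse ^ n := by
  induction n with
  | zero => simpa using reverse_C (1 : R)
  | succ n ih => rw [pow_succ, reverse_mul_of_domain, ih, pow_succ]

variable [CharZero R]

theorem rootMultiplicity_iterate_derivative {p : R[X]} {t : R} {k : ℕ}
    (hk : k ≤ p.rootMultiplicity t) :
    (derivative^[k] p).rootMultiplicity t = p.rootMultiplicity t - k := by
  induction k with
  | zero => rfl
  | succ k ih =>
    rw [Function.iterate_succ_apply',
      derivative_rootMultiplicity_of_root (isRoot_iterate_derivative_of_lt_rootMultiplicity hk),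
      ih (by omega)]
    omega

theorem eval_iterate_derivative_rootMultiplicity_ne_zero {p : R[X]} {t : R} (hp : p ≠ 0) :
    (derivative^[p.rootMultiplicity t] p).eval t ≠ 0 := by
  rw [eval_iterate_derivative_rootMultiplicity, nsmul_eq_mul]
  exact mul_ne_zero (Nat.cast_ne_zero.2 (Nat.factorial_ne_zero _))
    (eval_divByMonic_pow_rootMultiplicity_ne_zero t hp)

theorem iterate_derivative_ne_zero {p : R[X]} (hp : p ≠ 0) {k : ℕ} (hk : k ≤ p.natDegree) :
    derivative^[k] p ≠ 0 := by
  intro h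
  have hcoeff := coeff_iterate_derivative (k := k) p (p.natDegree - k)
  rw [h, Nat.sub_add_cancel hk, coeff_zero, nsmul_eq_mul, eq_comm] at hcoeff
  refine mul_ne_zero ?_ (leadingCoeff_ne_zero.2 hp) hcoeff
  exact Nat.cast_ne_zero.2 (Nat.descFactorial_eq_zero_iff_lt.not.2 (by omega))

/-- As a polynomial in `b`, the left side has zero derivative (the sum telescopes), so it equals
its value at `b = 0`. -/
theorem sum_eval_iterate_derivative_mul_eval_iterate_derivative {d : ℕ} {f g : R[X]}
    (hf : f.natDegree ≤ d) (hg : g.natDegree ≤ d) (b z : R) :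
    ∑ k ∈ range (d + 1), (derivative^[d - k] g).eval b * (-z) ^ k * (derivative^[k] f).eval (b * z)
      = ∑ k ∈ range (d + 1), k ! * (d - k)! * (f.coeff k * g.coeff (d - k)) * (-z) ^ k := by
  set T : ℕ → R[X] := fun k =>
    C ((-z) ^ k) * ((derivative^[k] f).comp (C z * X) * derivative^[d + 1 - k] g)
  have hterm : ∀ k ∈ range (d + 1),
      derivative (C ((-z) ^ k) * ((derivative^[k] f).comp (C z * X) * derivative^[d - k] g))
        = T k - T (k + 1) := by
    intro k hk
    have hkd : d + 1 - k = d - k + 1 := by have := mem_range.1 hk; omega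
    rw [derivative_C_mul, derivative_mul, derivative_comp, derivative_C_mul_X]
    simp only [T, hkd, Nat.add_sub_add_right, Function.iterate_succ_apply', map_pow, map_neg]
    ring
  have hconst : derivative (∑ k ∈ range (d + 1),
      C ((-z) ^ k) * ((derivative^[k] f).comp (C z * X) * derivative^[d - k] g)) = 0 := by
    rw [derivative_sum, sum_congr rfl hterm, sum_range_sub']
    simp [T, iterate_derivative_eq_zero (Nat.lt_succ_of_le hf),
      iterate_derivative_eq_zero (Nat.lt_succ_of_le hg)]
  have hev := congrArg (eval b) (eq_C_of_derivative_eq_zero hconst)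
  rw [eval_C, coeff_zero_eq_eval_zero] at hev
  simp only [eval_finsetSum, eval_mul, eval_C, eval_comp, eval_X, mul_zero,
    eval_zero_iterate_derivative, mul_comm z b] at hev
  convert hev using 1 <;> refine sum_congr rfl fun k _ => ?_ <;> ring

end IsDomain

theorem rootMultiplicity_reverse {K : Type*} [Field K] (q : K[X]) {b : K} (hb : b ≠ 0) :
    q.reverse.rootMultiplicity b⁻¹ = q.rootMultiplicity b := by
  rcases eq_or_ne q 0 with rfl | hq
  · simp
  set m := q.rootMultiplicity b
  set u := q /ₘ (X - C b) ^ m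
  have hlin : (X - C b).reverse = C (-b) * (X - C b⁻¹) := by
    rw [sub_eq_add_neg, ← C_neg, reverse_add_C, ← one_mul X, reverse_mul_X, ← C_1, reverse_C]
    simp [mul_sub, ← C_mul, hb]
    ring
  have hfac : q.reverse = C ((-b) ^ m) * (u.reverse * (X - C b⁻¹) ^ m) := by
    conv_lhs => rw [← pow_mul_divByMonic_rootMultiplicity_eq q b]
    rw [reverse_mul_of_domain, reverse_pow, hlin, mul_pow, C_pow]
    ring
  have hu : ¬u.reverse.IsRoot b⁻¹ := by
    let := invertibleOfNonzero hb
    have := (eval₂_reverse_eq_zero_iff (RingHom.id K) b u).not.2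
      (eval_divByMonic_pow_rootMultiplicity_ne_zero b hq)
    rwa [invOf_eq_inv] at this
  rw [hfac, rootMultiplicity_mul_of_not_isRoot (by simp [hb]),
    rootMultiplicity_mul_of_not_isRoot hu, rootMultiplicity_X_sub_C_pow]

theorem rootMultiplicity_sum_iterate_derivative_comp_C_mul_X {K : Type*} [Field K] [CharZero K]
    {d : ℕ} {f g : K[X]} (hf : f ≠ 0) (hg : g ≠ 0) (hgd : g.natDegree ≤ d) {a b : K} (ha : a ≠ 0)
    (hb : b ≠ 0) (hm : d ≤ f.rootMultiplicity a + g.rootMultiplicity b) :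
    (∑ k ∈ range (d + 1), C ((derivative^[d - k] g).eval b) * (-X) ^ k *
        (derivative^[k] f).comp (C b * X)).rootMultiplicity (a / b)
      = f.rootMultiplicity a + g.rootMultiplicity b - d := by
  set mf := f.rootMultiplicity a
  set mg := g.rootMultiplicity b
  have hmg : mg ≤ d := (rootMultiplicity_le_natDegree g b).trans hgd
  set F : ℕ → K[X] := fun k => C ((derivative^[d - k] g).eval b) * (-X) ^ k *
    (derivative^[k] f).comp (C b * X)
  have hcomp : ∀ k ≤ d - mg,
      ((derivative^[k] f).comp (C b * X)).rootMultiplicity (a / b) = mf + mg - d + (d - mg - k) :=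
    fun k hk => by
      rw [rootMultiplicity_comp_C_mul_X _ hb.isUnit, mul_div_cancel₀ a hb,
        rootMultiplicity_iterate_derivative (by omega)]
      omega
  have hlead : (derivative^[d - (d - mg)] g).eval b ≠ 0 := by
    rw [Nat.sub_sub_self hmg]
    exact eval_iterate_derivative_rootMultiplicity_ne_zero hg
  have hFK : (F (d - mg)).rootMultiplicity (a / b) = mf + mg - d := by
    rw [rootMultiplicity_mul_of_not_isRoot (by simp [hlead, ha, hb]), hcomp _ le_rfl]
    omega
  have hFK0 : F (d - mg) ≠ 0 := by
    refine mul_ne_zero (by simp [hlead]) ?_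
    rw [Ne, comp_C_mul_X_eq_zero_iff (mem_nonZeroDivisors_of_ne_zero hb)]
    exact iterate_derivative_ne_zero hf ((by omega : d - mg ≤ mf).trans
      (rootMultiplicity_le_natDegree f a))
  rw [← hFK]
  refine rootMultiplicity_sum_of_pow_succ_dvd (mem_range.2 (by omega)) hFK0 fun k hk hkK => ?_
  rw [hFK]
  rcases lt_or_gt_of_ne hkK with hlt | hgt
  · refine ((pow_dvd_pow _ ?_).trans (pow_rootMultiplicity_dvd _ _)).trans (dvd_mul_left _ _)
    rw [hcomp k hlt.le]
    omega
  · have hvanish : (derivative^[d - k] g).IsRoot b :=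
      isRoot_iterate_derivative_of_lt_rootMultiplicity (by have := mem_range.1 hk; omega)
    simp [hvanish.eq_zero]

end Polynomial

theorem C_mul_ffMul_eq_sum_coeff (d : ℕ) (p q : ℂ[X]) :
    C ((-1 : ℂ) ^ d * d !) * ffMul d p q
      = ∑ k ∈ range (d + 1), C ((k ! * (d - k)! : ℂ) * (p.coeff k * q.coeff k)) * (-X) ^ k := by
  rw [ffMul, mul_sum, ← sum_range_reflect]
  refine sum_congr rfl fun j hj => ?_
  obtain ⟨k, rfl⟩ : ∃ k, d = j + k := ⟨d - j, by have := mem_range.1 hj; omega⟩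
  have hchoose : ((j + k).choose k : ℂ) * j ! * k ! = (j + k)! := by
    exact_mod_cast Nat.add_choose_mul_factorial_mul_factorial j k
  rw [show j + k + 1 - 1 - j = k by omega, show j + k - k = j by omega, Nat.add_sub_cancel_left,
    etilde, etilde, Nat.add_sub_cancel, neg_pow (X : ℂ[X]), ← C_1, ← C_neg, ← C_pow, ← mul_assoc,
    ← C_mul, ← mul_assoc _ (C _), ← C_mul]
  congr 2
  have hc : ((j + k).choose k : ℂ) ≠ 0 := Nat.cast_ne_zero.2 (Nat.choose_pos (by omega)).ne'
  have hsign : (-1 : ℂ) ^ (j + k) * (-1) ^ k * (-1) ^ k * (-1) ^ k = (-1) ^ j := by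
    rw [← pow_add, ← pow_add, ← pow_add, show j + k + k + k + k = j + 2 * (2 * k) by ring,
      pow_add, pow_mul]
    norm_num
  rw [← hchoose, ← hsign]
  field_simp

theorem C_mul_ffMul_eq_sum_iterate_derivative {d : ℕ} {p q : ℂ[X]} (hp : p.natDegree ≤ d)
    (hq : q.natDegree = d) (b : ℂ) :
    C ((-1 : ℂ) ^ d * d !) * ffMul d p q = ∑ k ∈ range (d + 1),
      C ((derivative^[d - k] q.reverse).eval b) * (-X) ^ k * (derivative^[k] p).comp (C b * X) := by
  refine Polynomial.funext fun z => ?_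
  have hcoeff : ∀ k ∈ range (d + 1), q.reverse.coeff (d - k) = q.coeff k := fun k hk => by
    rw [coeff_reverse, hq, revAt_le (Nat.sub_le d k), Nat.sub_sub_self (mem_range_succ_iff.1 hk)]
  rw [C_mul_ffMul_eq_sum_coeff]
  simp only [eval_finsetSum, eval_mul, eval_C, eval_pow, eval_neg, eval_X, eval_comp]
  rw [sum_eval_iterate_derivative_mul_eval_iterate_derivative hp (hq ▸ reverse_natDegree_le q)]
  exact sum_congr rfl fun k hk => by rw [hcoeff k hk]

theorem ffMul_rootMultiplicity (d : ℕ) (p q : Polynomial ℂ)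
    (hp : p.Monic) (hq : q.Monic) (hpd : p.natDegree = d) (hqd : q.natDegree = d)
    (α β : ℂ) (hα0 : α ≠ 0) (hβ0 : β ≠ 0) (mα mβ : ℕ)
    (hα : p.rootMultiplicity α = mα) (hβ : q.rootMultiplicity β = mβ)
    (hm : d ≤ mα + mβ) :
    (ffMul d p q).rootMultiplicity (α * β) = mα + mβ - d := by
  have hrev : q.reverse.rootMultiplicity β⁻¹ = mβ := hβ ▸ rootMultiplicity_reverse q hβ0
  rw [← rootMultiplicity_mul_of_not_isRoot (p := C ((-1 : ℂ) ^ d * d !))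
      (by simp [Nat.factorial_ne_zero]),
    C_mul_ffMul_eq_sum_iterate_derivative hpd.le hqd β⁻¹, ← div_inv_eq_mul,
    rootMultiplicity_sum_iterate_derivative_comp_C_mul_X hp.ne_zero
      (mt reverse_eq_zero.1 hq.ne_zero) (hqd ▸ reverse_natDegree_le q) hα0 (inv_ne_zero hβ0)
      (by rw [hα, hrev]; exact hm), hα, hrev]
end

section
/- Fix a degree d and define r^(k)(x) = (x D / d)^k applied to (x-1)^d, where D = d/dx. Then the set {r^(0), r^(1), ..., r^(d)} is a basis of the complex vector space of polynomials of degree at most d. -/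
/-!
The operator `f ↦ x f' / d` multiplies the monomial `x^m` by `m / d`, so the coefficient of `x^m`
in `r^(k)` is `a_m (m / d)^k`, where `a_m = (-1)^(d-m) binom(d, m)` is the coefficient of `x^m`
in `(x - 1)^d`. The coefficient matrix of `r^(0), …, r^(d)` in the monomial basis is therefore
`diag(a) · V`, with `V` the Vandermonde matrix of the distinct nodes `0, 1/d, …, 1`, and both
factors are invertible.
-/

open Polynomial

/-- `r^(k) = (x D / d)^k (x-1)^d`. -/
noncomputable def rpoly (d k : ℕ) : Polynomial ℂ :=
  (fun f => Polynomial.C ((d : ℂ))⁻¹ * (Polynomial.X * Polynomial.derivative f))^[k]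
    ((Polynomial.X - 1) ^ d)

section
variable {K : Type*} [Field K]

theorem linearIndependent_and_span_eq_degreeLT_of_isUnit_det {n : ℕ} {p : Fin n → K[X]}
    (hp : ∀ k, p k ∈ degreeLT K n)
    (hdet : IsUnit (Matrix.of fun m k : Fin n => (p k).coeff m).det) :
    LinearIndependent K p ∧ Submodule.span K (Set.range p) = degreeLT K n := by
  let w : Fin n → degreeLT K n := fun k => ⟨p k, hp k⟩
  have hw : IsUnit ((degreeLT.basis K n).det w) := by
    rw [Module.Basis.det_apply]
    convert hdet using 2
    ext m k
    rfl
  obtain ⟨hli, hspan⟩ := (degreeLT.basis K n).is_basis_iff_det.2 hw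
  have hp' : (degreeLT K n).subtype ∘ w = p := rfl
  constructor
  · exact hp' ▸ hli.map' _ (degreeLT K n).ker_subtype
  · rw [← hp', Set.range_comp, ← Submodule.map_span, hspan, Submodule.map_subtype_top]

theorem coeff_C_inv_mul_X_mul_derivative (c : K) (f : K[X]) (m : ℕ) :
    (C c⁻¹ * (X * derivative f)).coeff m = m / c * f.coeff m := by
  cases m with
  | zero => simp
  | succ m =>
    rw [coeff_C_mul, coeff_X_mul, coeff_derivative]
    push_cast
    ring

theorem coeff_X_sub_one_pow (d m : ℕ) :
    ((X - 1 : K[X]) ^ d).coeff m = (-1) ^ (d - m) * d.choose m := by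
  rw [← C_1, sub_eq_add_neg, ← C_neg, coeff_X_add_C_pow]

theorem coeff_X_sub_one_pow_ne_zero [CharZero K] {d m : ℕ} (hm : m ≤ d) :
    ((X - 1 : K[X]) ^ d).coeff m ≠ 0 := by
  rw [coeff_X_sub_one_pow]
  exact mul_ne_zero (by simp) (Nat.cast_ne_zero.2 (Nat.choose_pos hm).ne')

end

theorem coeff_rpoly (d k m : ℕ) :
    (rpoly d k).coeff m = ((X - 1 : ℂ[X]) ^ d).coeff m * ((m : ℂ) / d) ^ k := by
  induction k with
  | zero => simp [rpoly]
  | succ k ih =>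
    rw [rpoly, Function.iterate_succ_apply', ← rpoly, coeff_C_inv_mul_X_mul_derivative, ih]
    ring

theorem rpoly_mem_degreeLT (d k : ℕ) : rpoly d k ∈ degreeLT ℂ (d + 1) := by
  rw [mem_degreeLT, degree_lt_iff_coeff_zero]
  intro m hm
  rw [coeff_rpoly, coeff_X_sub_one_pow, Nat.choose_eq_zero_of_lt (by exact_mod_cast hm)]
  simp

theorem rpoly_basis (d : ℕ) (hd : 0 < d) :
    LinearIndependent ℂ (fun k : Fin (d + 1) => rpoly d k) ∧
      Submodule.span ℂ (Set.range (fun k : Fin (d + 1) => rpoly d k)) =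
        Polynomial.degreeLT ℂ (d + 1) := by
  refine linearIndependent_and_span_eq_degreeLT_of_isUnit_det (fun k => rpoly_mem_degreeLT d k) ?_
  have hcoeff : (Matrix.of fun m k : Fin (d + 1) => (rpoly d k).coeff m) =
      Matrix.diagonal (fun m : Fin (d + 1) => ((X - 1 : ℂ[X]) ^ d).coeff m) *
        Matrix.vandermonde (fun m : Fin (d + 1) => (m : ℂ) / d) := by
    ext m k
    simp [coeff_rpoly, Matrix.vandermonde_apply]
  have hnodes : Function.Injective (fun m : Fin (d + 1) => (m : ℂ) / d) := by
    intro a b hab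
    have hd' : (d : ℂ) ≠ 0 := Nat.cast_ne_zero.2 hd.ne'
    exact Fin.ext (by exact_mod_cast div_left_inj' hd' |>.1 hab)
  rw [hcoeff, Matrix.det_mul, Matrix.det_diagonal, isUnit_iff_ne_zero]
  exact mul_ne_zero
    (Finset.prod_ne_zero_iff.2 fun m _ => coeff_X_sub_one_pow_ne_zero (Nat.lt_succ_iff.1 m.2))
    (Matrix.det_vandermonde_ne_zero_iff.2 hnodes)
end

section
/- For monic polynomials p, q of degree d with all roots nonzero, the reversal identity (p ⊠_d q)^⟨-1⟩ = p^⟨-1⟩ ⊠_d q^⟨-1⟩ holds, where the reversed polynomial is p^⟨-1⟩(x) = x^d p(1/x)/ẽ_d(p). -/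
open Polynomial Finset

/-- The reversed polynomial `p^⟨-1⟩`, the monic degree-`d` polynomial with
`ẽ_k(p^⟨-1⟩) = ẽ_{d-k}(p)/ẽ_d(p)`. -/
noncomputable def revP (d : ℕ) (p : Polynomial ℂ) : Polynomial ℂ :=
  ∑ k ∈ range (d + 1),
    C ((-1) ^ k * (d.choose k : ℂ) * (etilde d p (d - k) / etilde d p d)) * X ^ (d - k)

/-!
Both sides are polynomials written in terms of their normalized coefficients, and reading
those back off shows that for `k ≤ d` each side has `ẽ_k = ẽ_{d-k}(p) ẽ_{d-k}(q) / (ẽ_d(p) ẽ_d(q))`.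
-/

noncomputable def ofEtilde (d : ℕ) (e : ℕ → ℂ) : ℂ[X] :=
  ∑ k ∈ range (d + 1), C ((-1) ^ k * (d.choose k : ℂ) * e k) * X ^ (d - k)

lemma coeff_sum_C_mul_X_pow_sub {R : Type*} [Semiring R] (d : ℕ) (f : ℕ → R) {k : ℕ}
    (hk : k ≤ d) : (∑ j ∈ range (d + 1), C (f j) * X ^ (d - j)).coeff (d - k) = f k := by
  rw [finsetSum_coeff, Finset.sum_eq_single k]
  · simp
  · intro j hj hjk
    have hjd := Finset.mem_range.mp hj
    rw [coeff_C_mul, coeff_X_pow, if_neg (by omega), mul_zero]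
  · intro hk'
    exact absurd (Finset.mem_range.mpr (by omega)) hk'

lemma etilde_ofEtilde (d : ℕ) (e : ℕ → ℂ) {k : ℕ} (hk : k ≤ d) :
    etilde d (ofEtilde d e) k = e k := by
  have hchoose : (d.choose k : ℂ) ≠ 0 := Nat.cast_ne_zero.mpr (Nat.choose_pos hk).ne'
  have hsign : ((-1 : ℂ)) ^ k * (-1) ^ k = 1 := by
    rw [← mul_pow]; norm_num
  rw [etilde, ofEtilde, coeff_sum_C_mul_X_pow_sub d _ hk, ← mul_assoc, ← mul_assoc, hsign,
    one_mul, mul_div_cancel_left₀ _ hchoose]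

lemma ofEtilde_congr (d : ℕ) {e e' : ℕ → ℂ} (h : ∀ k ≤ d, e k = e' k) :
    ofEtilde d e = ofEtilde d e' :=
  Finset.sum_congr rfl fun k hk => by rw [h k (by have := Finset.mem_range.mp hk; omega)]

lemma ffMul_eq_ofEtilde (d : ℕ) (p q : ℂ[X]) :
    ffMul d p q = ofEtilde d (fun k => etilde d p k * etilde d q k) := rfl

lemma revP_eq_ofEtilde (d : ℕ) (p : ℂ[X]) :
    revP d p = ofEtilde d (fun k => etilde d p (d - k) / etilde d p d) := rfl

lemma etilde_ffMul (d : ℕ) (p q : ℂ[X]) {k : ℕ} (hk : k ≤ d) :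
    etilde d (ffMul d p q) k = etilde d p k * etilde d q k := by
  rw [ffMul_eq_ofEtilde, etilde_ofEtilde d _ hk]

lemma etilde_revP (d : ℕ) (p : ℂ[X]) {k : ℕ} (hk : k ≤ d) :
    etilde d (revP d p) k = etilde d p (d - k) / etilde d p d := by
  rw [revP_eq_ofEtilde, etilde_ofEtilde d _ hk]

theorem ffMul_reverse_general (d : ℕ) (p q : Polynomial ℂ) :
    revP d (ffMul d p q) = ffMul d (revP d p) (revP d q) := by
  rw [revP_eq_ofEtilde d (ffMul d p q), ffMul_eq_ofEtilde d (revP d p)]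
  refine ofEtilde_congr d fun k hk => ?_
  rw [etilde_ffMul d p q (Nat.sub_le d k), etilde_ffMul d p q le_rfl, etilde_revP d p hk,
    etilde_revP d q hk, div_mul_div_comm]

theorem ffMul_reverse (d : ℕ) (p q : Polynomial ℂ)
    (hp : p.Monic) (hq : q.Monic) (hpd : p.natDegree = d) (hqd : q.natDegree = d)
    (hp0 : p.coeff 0 ≠ 0) (hq0 : q.coeff 0 ≠ 0) :
    revP d (ffMul d p q) = ffMul d (revP d p) (revP d q) :=
  ffMul_reverse_general d p q
end

section
/- Let p, q be monic real-rooted polynomials of degree d, and suppose F_q(x) ≤ F_p(x) + l/d for all x ∈ ℝ, for some integer 0 ≤ l ≤ d. Then there exists a monic real-rooted polynomial r of degree d such that: (a) p ≤ r, i.e., F_r(x) ≤ F_p(x) for all x; and (b) F_q(x) ≤ F_r(x) + l/d for all x; moreover r can be obtained from q by replacing the l smallest roots of q by a common value a larger than all roots of p and q. -/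
open Finset

/-!
Only the counting functions `x ↦ #{i | f i ≤ x}` of the root vectors matter. Let `c` be `b` with
its first `l` entries replaced by some `t` exceeding all entries of `a` and `b`. Below `t`, the
sublevel set of `c` is that of `b` minus the first `l` indices; since `b` is monotone both are
initial segments, so its count is exactly `#{b ≤ x} - l` (truncated), which the hypothesis bounds
by `#{a ≤ x}`, while `#{b ≤ x} ≤ #{c ≤ x} + l` needs no ordering at all. From `t` on, every
entry of `a` and of `c` is counted, so both inequalities hold there too.
-/

section Replace

variable {ι : Type*}

lemma card_sdiff_eq_tsub_of_isLowerSet [LinearOrder ι] {s u : Finset ι}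
    (hs : IsLowerSet (s : Set ι)) (hu : IsLowerSet (u : Set ι)) : #(s \ u) = #s - #u := by
  rcases hs.total hu with hsu | hus
  · rw [sdiff_eq_empty_iff_subset.mpr (coe_subset.mp hsu), card_empty,
      Nat.sub_eq_zero_of_le (card_le_card (coe_subset.mp hsu))]
  · exact card_sdiff_of_subset (coe_subset.mp hus)

variable [Fintype ι] {low : ι → Prop} [DecidablePred low] {t x : ℝ}

lemma filter_ite_le_of_lt [DecidableEq ι] (b : ι → ℝ) (hx : x < t) :
    ({i | (if low i then t else b i) ≤ x} : Finset ι) =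
      ({i | b i ≤ x} : Finset ι) \ ({i | low i} : Finset ι) := by
  ext i
  by_cases h : low i <;> simp [h, hx.not_ge]

lemma isLowerSet_filter_le [Preorder ι] {b : ι → ℝ} (hb : Monotone b) (x : ℝ) :
    IsLowerSet (({i | b i ≤ x} : Finset ι) : Set ι) := by
  intro i j hji hi
  simp only [coe_filter, mem_univ, true_and] at hi ⊢
  exact (hb hji).trans hi

lemma card_sublevel_replace_le [LinearOrder ι] {a b : ι → ℝ} (hb : Monotone b)
    (hlow : IsLowerSet {i | low i}) (hat : ∀ i, a i ≤ t)
    (hcount : ∀ y, #{i | b i ≤ y} ≤ #{i | a i ≤ y} + #{i | low i}) (x : ℝ) :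
    #{i | (if low i then t else b i) ≤ x} ≤ #{i | a i ≤ x} := by
  rcases lt_or_ge x t with hx | hx
  · have hlow' : IsLowerSet (({i | low i} : Finset ι) : Set ι) := by simpa using hlow
    rw [filter_ite_le_of_lt b hx,
      card_sdiff_eq_tsub_of_isLowerSet (isLowerSet_filter_le hb x) hlow']
    exact Nat.sub_le_iff_le_add.mpr (hcount x)
  · rw [card_filter_eq_iff.mpr fun i _ => (hat i).trans hx]
    exact card_le_univ _

lemma card_sublevel_le_replace_add [DecidableEq ι] {b : ι → ℝ} (hbt : ∀ i, b i ≤ t)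
    (x : ℝ) :
    #{i | b i ≤ x} ≤ #{i | (if low i then t else b i) ≤ x} + #{i | low i} := by
  rcases lt_or_ge x t with hx | hx
  · rw [filter_ite_le_of_lt b hx]
    exact card_le_card_sdiff_add_card
  · have hall : ∀ i ∈ univ, (if low i then t else b i) ≤ x := fun i _ => by
      split_ifs
      exacts [hx, (hbt i).trans hx]
    rw [card_filter_eq_iff.mpr hall]
    exact (card_le_univ _).trans (Nat.le_add_right _ _)

end Replace

theorem exists_replaced_roots_poly_general (d l : ℕ) (hl : l ≤ d)
    (a b : Fin d → ℝ) (hb : Monotone b)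
    (hF : ∀ x : ℝ,
      ((Finset.univ.filter (fun i => b i ≤ x)).card : ℝ) / d ≤
        ((Finset.univ.filter (fun i => a i ≤ x)).card : ℝ) / d + (l : ℝ) / d) :
    ∃ t : ℝ, (∀ i, a i < t) ∧ (∀ i, b i < t) ∧
      -- the roots of `r`: the `l` smallest roots of `q` are replaced by the common value `t`
      ∀ c : Fin d → ℝ, (c = fun i : Fin d => if (i : ℕ) < l then t else b i) →
      ∀ r : Polynomial ℝ, r = ∏ i, (Polynomial.X - Polynomial.C (c i)) →
        ((∀ x : ℝ,
            ((Finset.univ.filter (fun i => c i ≤ x)).card : ℝ) / d ≤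
              ((Finset.univ.filter (fun i => a i ≤ x)).card : ℝ) / d) ∧
         (∀ x : ℝ,
            ((Finset.univ.filter (fun i => b i ≤ x)).card : ℝ) / d ≤
              ((Finset.univ.filter (fun i => c i ≤ x)).card : ℝ) / d + (l : ℝ) / d)) := by
  obtain ⟨M, hM⟩ := Finite.bddAbove_range fun i => max (a i) (b i)
  have hmax (i : Fin d) : max (a i) (b i) < M + 1 := (hM ⟨i, rfl⟩).trans_lt (lt_add_one M)
  refine ⟨M + 1, fun i => (le_max_left _ _).trans_lt (hmax i),
    fun i => (le_max_right _ _).trans_lt (hmax i), ?_⟩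
  rintro c rfl r -
  have hlow : IsLowerSet {i : Fin d | (i : ℕ) < l} := fun _ _ hji hi =>
    (Fin.le_def.mp hji).trans_lt hi
  have hcard_low : #{i : Fin d | (i : ℕ) < l} = l := by
    rw [Fin.card_filter_val_lt, min_eq_right hl]
  have hcount (y : ℝ) : #{i | b i ≤ y} ≤ #{i | a i ≤ y} + #{i : Fin d | (i : ℕ) < l} := by
    rcases Nat.eq_zero_or_pos d with rfl | hd
    · simp
    · have := hF y
      rw [← add_div, div_le_div_iff_of_pos_right (by positivity)] at this
      rw [hcard_low]
      exact_mod_cast this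
  refine ⟨fun x => ?_, fun x => ?_⟩
  · have := card_sublevel_replace_le hb hlow
      (fun i => (le_max_left _ _).trans (hmax i).le) hcount x
    exact div_le_div_of_nonneg_right (by exact_mod_cast this) d.cast_nonneg
  · have := card_sublevel_le_replace_add (low := fun i : Fin d => (i : ℕ) < l)
      (fun i => (le_max_right _ _).trans (hmax i).le) x
    rw [hcard_low] at this
    rw [← add_div]
    exact div_le_div_of_nonneg_right (by exact_mod_cast this) d.cast_nonneg

theorem exists_replaced_roots_poly (d l : ℕ) (hd : 0 < d) (hl : l ≤ d)
    (a b : Fin d → ℝ) (ha : Monotone a) (hb : Monotone b)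
    (p q : Polynomial ℝ)
    (hp : p = ∏ i, (Polynomial.X - Polynomial.C (a i)))
    (hq : q = ∏ i, (Polynomial.X - Polynomial.C (b i)))
    (hF : ∀ x : ℝ,
      ((Finset.univ.filter (fun i => b i ≤ x)).card : ℝ) / d ≤
        ((Finset.univ.filter (fun i => a i ≤ x)).card : ℝ) / d + (l : ℝ) / d) :
    ∃ t : ℝ, (∀ i, a i < t) ∧ (∀ i, b i < t) ∧
      -- the roots of `r`: the `l` smallest roots of `q` are replaced by the common value `t`
      ∀ c : Fin d → ℝ, (c = fun i : Fin d => if (i : ℕ) < l then t else b i) →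
      ∀ r : Polynomial ℝ, r = ∏ i, (Polynomial.X - Polynomial.C (c i)) →
        ((∀ x : ℝ,
            ((Finset.univ.filter (fun i => c i ≤ x)).card : ℝ) / d ≤
              ((Finset.univ.filter (fun i => a i ≤ x)).card : ℝ) / d) ∧
         (∀ x : ℝ,
            ((Finset.univ.filter (fun i => b i ≤ x)).card : ℝ) / d ≤
              ((Finset.univ.filter (fun i => c i ≤ x)).card : ℝ) / d + (l : ℝ) / d)) :=
  exists_replaced_roots_poly_general d l hl a b hb hF
end
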